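/- Let F(X_1,…,X_d) = (1 + X_1⋯X_d(1 + X_d + ⋯ + X_d^{k−2})) / ((1−X_1)⋯(1−X_{d−1})(1 − X_1⋯X_{d−1}X_d^k)) with d ≥ 2, k ≥ 3. Then F(X_1^{−1},…,X_d^{−1}) = (−1)^d · X_1⋯X_d·(1 + X_d + ⋯ + X_d^{k−2} + X_1⋯X_{d−1}X_d^{k−1}) / ((1−X_1)⋯(1−X_{d−1})(1 − X_1⋯X_{d−1}X_d^k)) as rational functions. -/

import Mathlib

/-!
Substituting `X_i ↦ X_i⁻¹` turns each factor `1 - X_i` into `-X_i⁻¹ (1 - X_i)`, the factor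
`1 - P X_d^k` (with `P = X₁⋯X_{d-1}`) into `-(P X_d^k)⁻¹ (1 - P X_d^k)`, and the geometric sum
`∑_{j<k-1} X_d^{-j}` into `X_d^{2-k} ∑_{j<k-1} X_d^j`. Clearing these monomials leaves the claimed
identity, the `d` sign changes giving `(-1)^d`. The denominators are nonzero since they do not
vanish at `X = (2,…,2)`.
-/

/-- The variable `X i` in the rational function field `ℚ(X₁,…,X_d)`. -/
noncomputable def XV (d : ℕ) (i : Fin d) : FractionRing (MvPolynomial (Fin d) ℚ) :=
  algebraMap (MvPolynomial (Fin d) ℚ) (FractionRing (MvPolynomial (Fin d) ℚ)) (MvPolynomial.X i)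

open Finset

section Field
variable {K : Type*} [Field K]

theorem pow_mul_geom_sum_inv {x : K} (hx : x ≠ 0) (n : ℕ) :
    x ^ n * ∑ j ∈ range n, x⁻¹ ^ j = x * ∑ j ∈ range n, x ^ j := by
  induction n with
  | zero => simp
  | succ n ih =>
    rw [sum_range_succ, sum_range_succ', mul_add, pow_succ', mul_assoc, ih, inv_pow,
      mul_inv_cancel_right₀ (pow_ne_zero n hx)]
    simp only [pow_succ, ← sum_mul]
    ring

theorem Finset.prod_one_sub_inv {ι : Type*} (s : Finset ι) {f : ι → K} (hf : ∀ i ∈ s, f i ≠ 0) :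
    ∏ i ∈ s, (1 - (f i)⁻¹) = (-1) ^ #s * (∏ i ∈ s, f i)⁻¹ * ∏ i ∈ s, (1 - f i) := by
  have h : ∀ i ∈ s, 1 - (f i)⁻¹ = -1 * (f i)⁻¹ * (1 - f i) := fun i hi => by
    field_simp [hf i hi]; ring
  rw [prod_congr rfl h, prod_mul_distrib, prod_mul_distrib, prod_const, prod_inv_distrib]

theorem inv_substitution_identity {ι : Type*} (s : Finset ι) {f : ι → K} {x : K} (n : ℕ)
    (hf : ∀ i ∈ s, f i ≠ 0) (hf1 : ∀ i ∈ s, 1 - f i ≠ 0) (hx : x ≠ 0)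
    (hPx : 1 - (∏ i ∈ s, f i) * x ^ (n + 1) ≠ 0) :
    (1 + (x⁻¹ * ∏ i ∈ s, (f i)⁻¹) * ∑ j ∈ range n, x⁻¹ ^ j) /
        ((∏ i ∈ s, (1 - (f i)⁻¹)) * (1 - (∏ i ∈ s, (f i)⁻¹) * x⁻¹ ^ (n + 1))) =
      (-1) ^ (#s + 1) * ((x * ∏ i ∈ s, f i) *
          (∑ j ∈ range n, x ^ j + (∏ i ∈ s, f i) * x ^ n)) /
        ((∏ i ∈ s, (1 - f i)) * (1 - (∏ i ∈ s, f i) * x ^ (n + 1))) := by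
  have hP : ∏ i ∈ s, f i ≠ 0 := prod_ne_zero_iff.2 hf
  have hA : ∏ i ∈ s, (1 - f i) ≠ 0 := prod_ne_zero_iff.2 hf1
  have hS : ∑ j ∈ range n, x⁻¹ ^ j = x * (∑ j ∈ range n, x ^ j) / x ^ n := by
    rw [← pow_mul_geom_sum_inv hx, mul_div_cancel_left₀ _ (pow_ne_zero n hx)]
  rw [hS, prod_one_sub_inv s hf, prod_inv_distrib, inv_pow, pow_succ (-1 : K)]
  set P := ∏ i ∈ s, f i
  set A := ∏ i ∈ s, (1 - f i)
  have hsq : ((-1 : K) ^ #s) ^ 2 = 1 := by rw [← pow_mul, pow_mul', neg_one_sq, one_pow]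
  have hPx' : P * x ^ (n + 1) - 1 ≠ 0 := by rwa [← neg_sub, neg_ne_zero]
  field_simp
  rw [hsq]
  ring

end Field

section FractionRing
variable {σ R : Type*} [CommRing R]

theorem one_sub_algebraMap_ne_zero_of_eval_ne_one {p : MvPolynomial σ R} (a : σ → R)
    (h : MvPolynomial.eval a p ≠ 1) :
    1 - algebraMap (MvPolynomial σ R) (FractionRing (MvPolynomial σ R)) p ≠ 0 := by
  rw [sub_ne_zero, ← map_one (algebraMap (MvPolynomial σ R) _), Ne,
    (IsFractionRing.injective _ _).eq_iff]
  rintro rfl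
  exact h (map_one _)

end FractionRing

theorem XV_ne_zero {d : ℕ} (i : Fin d) : XV d i ≠ 0 := by
  rw [XV, Ne, IsFractionRing.to_map_eq_zero_iff]
  exact MvPolynomial.X_ne_zero i

theorem one_sub_XV_ne_zero {d : ℕ} (i : Fin d) : 1 - XV d i ≠ 0 :=
  one_sub_algebraMap_ne_zero_of_eval_ne_one (fun _ => 2) (by simp)

theorem one_sub_prod_XV_mul_pow_ne_zero {d : ℕ} (s : Finset (Fin d)) (j : Fin d) (n : ℕ) :
    1 - (∏ i ∈ s, XV d i) * XV d j ^ (n + 1) ≠ 0 := by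
  simp only [XV, ← map_prod, ← map_pow, ← map_mul]
  refine one_sub_algebraMap_ne_zero_of_eval_ne_one (fun _ => 2) (ne_of_gt ?_)
  simp only [map_mul, map_pow, map_prod, MvPolynomial.eval_X, prod_const]
  exact one_lt_mul_of_le_of_lt (one_le_pow₀ one_le_two) (one_lt_pow₀ one_lt_two n.succ_ne_zero)

theorem Fin.filter_lt_pred_eq_erase {d : ℕ} (hd : 0 < d) :
    univ.filter (fun i : Fin d => i.val < d - 1) = univ.erase ⟨d - 1, by omega⟩ := by
  ext i
  simp only [mem_filter, mem_univ, true_and, mem_erase, and_true, Ne, Fin.ext_iff]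
  omega

/-- With `F(X₁,…,X_d) = (1 + X₁⋯X_d(1 + X_d + ⋯ + X_d^{k−2}))
/((1−X₁)⋯(1−X_{d−1})(1 − X₁⋯X_{d−1}X_d^k))`, one has
`F(X₁⁻¹,…,X_d⁻¹) = (−1)^d · X₁⋯X_d·(1 + X_d + ⋯ + X_d^{k−2} + X₁⋯X_{d−1}X_d^{k−1})
/((1−X₁)⋯(1−X_{d−1})(1 − X₁⋯X_{d−1}X_d^k))` as rational functions. -/
theorem stmt4 (d k : ℕ) (hd : 2 ≤ d) (hk : 3 ≤ k) :
    (1 + (∏ i : Fin d, (XV d i)⁻¹) *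
        ∑ j ∈ Finset.range (k - 1), ((XV d ⟨d - 1, by omega⟩)⁻¹) ^ j) /
      ((∏ i ∈ Finset.univ.filter (fun i : Fin d => i.val < d - 1), (1 - (XV d i)⁻¹)) *
        (1 - (∏ i ∈ Finset.univ.filter (fun i : Fin d => i.val < d - 1), (XV d i)⁻¹) *
          ((XV d ⟨d - 1, by omega⟩)⁻¹) ^ k)) =
    (-1 : FractionRing (MvPolynomial (Fin d) ℚ)) ^ d *
      ((∏ i : Fin d, XV d i) *
        (∑ j ∈ Finset.range (k - 1), (XV d ⟨d - 1, by omega⟩) ^ j +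
          (∏ i ∈ Finset.univ.filter (fun i : Fin d => i.val < d - 1), XV d i) *
            (XV d ⟨d - 1, by omega⟩) ^ (k - 1))) /
      ((∏ i ∈ Finset.univ.filter (fun i : Fin d => i.val < d - 1), (1 - XV d i)) *
        (1 - (∏ i ∈ Finset.univ.filter (fun i : Fin d => i.val < d - 1), XV d i) *
          (XV d ⟨d - 1, by omega⟩) ^ k)) := by
  have hd0 : 0 < d := by omega
  set T := univ.filter (fun i : Fin d => i.val < d - 1)
  have hT : T = univ.erase ⟨d - 1, by omega⟩ := Fin.filter_lt_pred_eq_erase hd0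
  have hprod (f : Fin d → FractionRing (MvPolynomial (Fin d) ℚ)) :
      ∏ i, f i = f ⟨d - 1, by omega⟩ * ∏ i ∈ T, f i := by
    rw [hT, mul_prod_erase _ _ (mem_univ _)]
  have hsign : (-1 : FractionRing (MvPolynomial (Fin d) ℚ)) ^ d = (-1) ^ (#T + 1) := by
    rw [hT, card_erase_of_mem (mem_univ _), card_univ, Fintype.card_fin, Nat.sub_add_cancel hd0]
  obtain ⟨n, rfl⟩ : ∃ n, k = n + 1 := ⟨k - 1, by omega⟩
  rw [hprod, hprod, hsign, Nat.add_sub_cancel]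
  exact inv_substitution_identity T n (fun i _ => XV_ne_zero i) (fun i _ => one_sub_XV_ne_zero i)
    (XV_ne_zero _) (one_sub_prod_XV_mul_pow_ne_zero T _ n)
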